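/- Let x be a point of the boundary of Dom(φ) and let z ∈ ℝᵈ be such that inf_{n ∈ N(x)} ⟨n, z⟩ > 0, where N(x) is the set of exterior unit normals to the closure of Dom(φ) at x. Then ∂φ_*(x; z) = inf_{x* ∈ ∂φ(x)} ⟨x*, z⟩ (with the convention that the infimum over the empty set is +∞). -/

import Mathlib

open scoped RealInnerProductSpace

/-- The subdifferential of an extended-real-valued function ψ at x. -/
def subdiff {d : ℕ} (ψ : EuclideanSpace ℝ (Fin d) → EReal)
    (x : EuclideanSpace ℝ (Fin d)) : Set (EuclideanSpace ℝ (Fin d)) :=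
  {y | ∀ z, ((⟪y, z - x⟫ : ℝ) : EReal) + ψ x ≤ ψ z}

/-- ∂φ_*(x; z): the liminf of ⟨x*, z'⟩ over triples (x', z', x*) with x* ∈ ∂φ(x'),
as (x', z') → (x, z).  (Equivalently, the liminf as (x', z') → (x, z) of the infimum
of ⟨x*, z'⟩ over x* ∈ ∂φ(x'), computed in [−∞, +∞].) -/
noncomputable def subdiffLiminf {d : ℕ} (φ : EuclideanSpace ℝ (Fin d) → EReal)
    (x z : EuclideanSpace ℝ (Fin d)) : EReal :=
  Filter.liminf
    (fun p : EuclideanSpace ℝ (Fin d) × EuclideanSpace ℝ (Fin d) =>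
      ⨅ y ∈ subdiff φ p.1, ((⟪y, p.2⟫ : ℝ) : EReal))
    (nhds (x, z))

/-- The set of exterior unit normals to the closure of Dom(φ) at x. -/
def extNormals {d : ℕ} (φ : EuclideanSpace ℝ (Fin d) → EReal)
    (x : EuclideanSpace ℝ (Fin d)) : Set (EuclideanSpace ℝ (Fin d)) :=
  {n | ‖n‖ = 1 ∧ ∀ w ∈ closure {w | φ w ≠ ⊤}, (⟪n, w - x⟫ : ℝ) ≤ 0}

/-!
Suppose ⟪yₖ, zₖ⟫ < b < inf_{y ∈ ∂φ(x)} ⟪y, z⟫ with yₖ ∈ ∂φ(xₖ) and (xₖ, zₖ) → (x, z). If (yₖ)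
has a bounded subsequence, its limit points lie in ∂φ(x), since lower semicontinuity of φ makes
the graph of ∂φ closed; this contradicts the choice of b. Otherwise ‖yₖ‖ → ∞, and dividing the
subgradient inequality ⟪yₖ, w - xₖ⟫ ≤ φ(w) - φ(xₖ) by ‖yₖ‖ shows that every limit point n of
yₖ / ‖yₖ‖ is an exterior unit normal at x, while ⟪n, z⟫ ≤ 0; this contradicts the hypothesis on z.
So inf_{y ∈ ∂φ(·)} ⟪y, ·⟫ is lower semicontinuous at (x, z), i.e. equals its liminf there.
-/

open Filter Topology

theorem LowerSemicontinuousAt.liminf_nhds_eq {α γ : Type*} [TopologicalSpace α]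
    [CompleteLinearOrder γ] {f : α → γ} {x : α} (hf : LowerSemicontinuousAt f x) :
    liminf f (𝓝 x) = f x :=
  le_antisymm
    (liminf_le_of_frequently_le' <|
      Frequently.filter_mono (p := (f · ≤ f x)) (by simp) (pure_le_nhds x))
    hf.le_liminf

lemma exists_subseq_tendsto_or_tendsto_normalize {E : Type*} [NormedAddCommGroup E]
    [NormedSpace ℝ E] [ProperSpace E] (Y : ℕ → E) :
    (∃ y, ∃ ψ : ℕ → ℕ, StrictMono ψ ∧ Tendsto (Y ∘ ψ) atTop (𝓝 y)) ∨
      ∃ n, ‖n‖ = 1 ∧ ∃ ψ : ℕ → ℕ, StrictMono ψ ∧ Tendsto (fun k ↦ ‖Y (ψ k)‖) atTop atTop ∧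
        Tendsto (fun k ↦ ‖Y (ψ k)‖⁻¹ • Y (ψ k)) atTop (𝓝 n) := by
  by_cases hbdd : ∃ R, ∃ᶠ k in atTop, Y k ∈ Metric.closedBall (0 : E) R
  · obtain ⟨R, hR⟩ := hbdd
    obtain ⟨y, -, ψ, hψ, hy⟩ := tendsto_subseq_of_frequently_bounded Metric.isBounded_closedBall hR
    exact Or.inl ⟨y, ψ, hψ, hy⟩
  · simp only [not_exists, not_frequently, mem_closedBall_zero_iff, not_le] at hbdd
    have hnorm : Tendsto (fun k ↦ ‖Y k‖) atTop atTop :=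
      tendsto_atTop.2 fun R ↦ (hbdd R).mono fun _ h ↦ h.le
    have hsphere : ∃ᶠ k in atTop, ‖Y k‖⁻¹ • Y k ∈ Metric.sphere (0 : E) 1 :=
      Eventually.frequently <| (hbdd 0).mono fun k hk ↦ by
        rw [mem_sphere_zero_iff_norm, norm_smul, norm_inv, norm_norm, inv_mul_cancel₀ hk.ne']
    obtain ⟨n, hn, ψ, hψ, hlim⟩ :=
      tendsto_subseq_of_frequently_bounded Metric.isBounded_sphere hsphere
    rw [Metric.isClosed_sphere.closure_eq, mem_sphere_zero_iff_norm] at hn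
    exact Or.inr ⟨n, hn, ψ, hψ, hnorm.comp hψ.tendsto_atTop, hlim⟩

lemma inner_nonpos_of_tendsto_normalize {F : Type*} [NormedAddCommGroup F]
    [InnerProductSpace ℝ F] {ι : Type*} {l : Filter ι} [l.NeBot] {ys zs : ι → F} {n z : F}
    {b : ℝ} (hnorm : Tendsto (fun k ↦ ‖ys k‖) l atTop)
    (hn : Tendsto (fun k ↦ ‖ys k‖⁻¹ • ys k) l (𝓝 n)) (hzs : Tendsto zs l (𝓝 z))
    (hb : ∀ᶠ k in l, ⟪ys k, zs k⟫ ≤ b) : ⟪n, z⟫ ≤ 0 := by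
  refine le_of_tendsto_of_tendsto (hn.inner hzs)
    (by simpa using hnorm.inv_tendsto_atTop.mul_const b) ?_
  filter_upwards [hb] with k hk
  rw [real_inner_smul_left]
  exact mul_le_mul_of_nonneg_left hk (by positivity)

noncomputable def subdiffInfInner {d : ℕ} (φ : EuclideanSpace ℝ (Fin d) → EReal)
    (x z : EuclideanSpace ℝ (Fin d)) : EReal :=
  ⨅ y ∈ subdiff φ x, ((⟪y, z⟫ : ℝ) : EReal)

section

variable {d : ℕ} {φ : EuclideanSpace ℝ (Fin d) → EReal} {x y z w : EuclideanSpace ℝ (Fin d)}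
  {ι : Type*} {l : Filter ι} {xs ys zs : ι → EuclideanSpace ℝ (Fin d)}

lemma inner_sub_le_of_mem_subdiff (hy : y ∈ subdiff φ x) {r C : ℝ} (hw : φ w = r)
    (hC : (C : EReal) ≤ φ x) : ⟪y, w - x⟫ ≤ r - C := by
  have h : ((⟪y, w - x⟫ + C : ℝ) : EReal) ≤ r := by
    rw [EReal.coe_add, ← hw]
    exact (by gcongr : _ ≤ _ + φ x).trans (hy w)
  linarith [EReal.coe_le_coe_iff.1 h]

lemma eventually_inner_sub_le_of_mem_subdiff (hlsc : LowerSemicontinuous φ)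
    (hxs : Tendsto xs l (𝓝 x)) (hmem : ∀ᶠ k in l, ys k ∈ subdiff φ (xs k)) {r C : ℝ}
    (hw : φ w = r) (hC : (C : EReal) < φ x) : ∀ᶠ k in l, ⟪ys k, w - xs k⟫ ≤ r - C := by
  filter_upwards [hxs.eventually (hlsc x C hC), hmem] with k hCk hk
  exact inner_sub_le_of_mem_subdiff hk hw hCk.le

lemma exists_coe_eq_of_ne_top (hbot : ∀ x, φ x ≠ ⊥) (hw : φ w ≠ ⊤) : ∃ r : ℝ, φ w = r :=
  ⟨_, (EReal.coe_toReal hw (hbot w)).symm⟩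

lemma mem_subdiff_of_tendsto [l.NeBot] (hbot : ∀ x, φ x ≠ ⊥) (hlsc : LowerSemicontinuous φ)
    (hxs : Tendsto xs l (𝓝 x)) (hys : Tendsto ys l (𝓝 y))
    (hmem : ∀ᶠ k in l, ys k ∈ subdiff φ (xs k)) : y ∈ subdiff φ x := by
  intro w
  obtain hw | hw := eq_or_ne (φ w) ⊤
  · simp [hw]
  obtain ⟨r, hr⟩ := exists_coe_eq_of_ne_top hbot hw
  have hx : φ x ≤ ((r - ⟪y, w - x⟫ : ℝ) : EReal) := by
    refine EReal.ge_of_forall_gt_iff_ge.1 fun C hC ↦ ?_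
    have := le_of_tendsto (hys.inner (tendsto_const_nhds.sub hxs))
      (eventually_inner_sub_le_of_mem_subdiff hlsc hxs hmem hr hC)
    exact EReal.coe_le_coe_iff.2 (by linarith)
  calc ((⟪y, w - x⟫ : ℝ) : EReal) + φ x
      ≤ ((⟪y, w - x⟫ : ℝ) : EReal) + ((r - ⟪y, w - x⟫ : ℝ) : EReal) := by gcongr
    _ = φ w := by rw [← EReal.coe_add, add_sub_cancel, hr]

lemma mem_extNormals_of_tendsto_smul [l.NeBot] (hbot : ∀ x, φ x ≠ ⊥)
    (hlsc : LowerSemicontinuous φ) {t : ι → ℝ} {n : EuclideanSpace ℝ (Fin d)}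
    (hxs : Tendsto xs l (𝓝 x)) (hmem : ∀ᶠ k in l, ys k ∈ subdiff φ (xs k))
    (ht0 : ∀ᶠ k in l, 0 ≤ t k) (ht : Tendsto t l (𝓝 0))
    (hn : Tendsto (fun k ↦ t k • ys k) l (𝓝 n)) (hn1 : ‖n‖ = 1) : n ∈ extNormals φ x := by
  have hclosed : IsClosed {w | ⟪n, w - x⟫ ≤ 0} := isClosed_le (by fun_prop) continuous_const
  refine ⟨hn1, closure_minimal (fun w hw ↦ ?_) hclosed⟩
  obtain ⟨r, hr⟩ := exists_coe_eq_of_ne_top hbot hw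
  obtain ⟨C, -, hC⟩ := EReal.exists_between_coe_real (bot_lt_iff_ne_bot.2 (hbot x))
  refine le_of_tendsto_of_tendsto (hn.inner (tendsto_const_nhds.sub hxs))
    (by simpa using ht.mul_const (r - C)) ?_
  filter_upwards [eventually_inner_sub_le_of_mem_subdiff hlsc hxs hmem hr hC, ht0] with k hk htk
  rw [real_inner_smul_left]
  exact mul_le_mul_of_nonneg_left hk htk

lemma subdiffInfInner_le_of_tendsto [l.NeBot] (hbot : ∀ x, φ x ≠ ⊥)
    (hlsc : LowerSemicontinuous φ) {b : ℝ} (hxs : Tendsto xs l (𝓝 x))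
    (hzs : Tendsto zs l (𝓝 z)) (hys : Tendsto ys l (𝓝 y))
    (hmem : ∀ᶠ k in l, ys k ∈ subdiff φ (xs k)) (hb : ∀ᶠ k in l, ⟪ys k, zs k⟫ ≤ b) :
    subdiffInfInner φ x z ≤ b :=
  (iInf₂_le y (mem_subdiff_of_tendsto hbot hlsc hxs hys hmem)).trans
    (EReal.coe_le_coe_iff.2 (le_of_tendsto (hys.inner hzs) hb))

theorem lowerSemicontinuousAt_subdiffInfInner (hbot : ∀ x, φ x ≠ ⊥)
    (hlsc : LowerSemicontinuous φ) (hz : ∀ n ∈ extNormals φ x, 0 < ⟪n, z⟫) :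
    LowerSemicontinuousAt (fun p ↦ subdiffInfInner φ p.1 p.2) (x, z) := by
  intro a ha
  obtain ⟨b, hab, hb⟩ := EReal.exists_between_coe_real ha
  suffices ∀ᶠ p in 𝓝 (x, z), ∀ y ∈ subdiff φ p.1, b ≤ ⟪y, p.2⟫ by
    filter_upwards [this] with p hp
    exact hab.trans_le (le_iInf₂ fun y hy ↦ EReal.coe_le_coe_iff.2 (hp y hy))
  by_contra hfreq
  simp only [not_eventually, not_forall, not_le, exists_prop] at hfreq
  obtain ⟨p, hp, hpY⟩ := exists_seq_forall_of_frequently hfreq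
  choose Y hY hYb using hpY
  have hxs := (continuous_fst.tendsto (x, z)).comp hp
  have hzs := (continuous_snd.tendsto (x, z)).comp hp
  rcases exists_subseq_tendsto_or_tendsto_normalize Y with
    ⟨y, ψ, hψ, hy⟩ | ⟨n, hn1, ψ, hψ, hnorm, hn⟩
  · exact hb.not_ge <| subdiffInfInner_le_of_tendsto hbot hlsc (hxs.comp hψ.tendsto_atTop)
      (hzs.comp hψ.tendsto_atTop) hy (.of_forall fun k ↦ hY (ψ k))
      (.of_forall fun k ↦ (hYb (ψ k)).le)
  · have hnx : n ∈ extNormals φ x :=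
      mem_extNormals_of_tendsto_smul hbot hlsc (hxs.comp hψ.tendsto_atTop)
        (.of_forall fun k ↦ hY (ψ k)) (.of_forall fun k ↦ inv_nonneg.2 (norm_nonneg _))
        hnorm.inv_tendsto_atTop hn hn1
    exact (hz n hnx).not_ge <| inner_nonpos_of_tendsto_normalize hnorm hn
      (hzs.comp hψ.tendsto_atTop) (.of_forall fun k ↦ (hYb (ψ k)).le)

end

theorem subdiffLiminf_eq_inf_boundary_general {d : ℕ}
    (φ : EuclideanSpace ℝ (Fin d) → EReal)
    (hbot : ∀ x, φ x ≠ ⊥)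
    (hlsc : LowerSemicontinuous φ)
    (x : EuclideanSpace ℝ (Fin d))
    (z : EuclideanSpace ℝ (Fin d))
    (hz : ∃ c > (0 : ℝ), ∀ n ∈ extNormals φ x, c ≤ (⟪n, z⟫ : ℝ)) :
    subdiffLiminf φ x z = ⨅ y ∈ subdiff φ x, ((⟪y, z⟫ : ℝ) : EReal) := by
  obtain ⟨c, hc, hcz⟩ := hz
  exact (lowerSemicontinuousAt_subdiffInfInner hbot hlsc
    fun n hn ↦ hc.trans_le (hcz n hn)).liminf_nhds_eq

/-- Let x be a boundary point of Dom(φ) and z ∈ ℝᵈ be such that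
inf_{n ∈ N(x)} ⟨n, z⟩ > 0, where N(x) is the set of exterior unit normals to the
closure of Dom(φ) at x.  Then ∂φ_*(x; z) = inf_{x* ∈ ∂φ(x)} ⟨x*, z⟩ (the infimum over
the empty set being +∞). -/
theorem subdiffLiminf_eq_inf_boundary {d : ℕ} (hd : 0 < d)
    (φ : EuclideanSpace ℝ (Fin d) → EReal)
    (hbot : ∀ x, φ x ≠ ⊥)
    (hproper : ∃ x, φ x ≠ ⊤)
    (hconv : ∀ x y : EuclideanSpace ℝ (Fin d), ∀ a b : ℝ,
      0 ≤ a → 0 ≤ b → a + b = 1 →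
      φ (a • x + b • y) ≤ (a : EReal) * φ x + (b : EReal) * φ y)
    (hlsc : LowerSemicontinuous φ)
    (hint : (interior {w | φ w ≠ ⊤}).Nonempty)
    (x : EuclideanSpace ℝ (Fin d))
    (hx : x ∈ frontier {w | φ w ≠ ⊤})
    (z : EuclideanSpace ℝ (Fin d))
    (hz : ∃ c > (0 : ℝ), ∀ n ∈ extNormals φ x, c ≤ (⟪n, z⟫ : ℝ)) :
    subdiffLiminf φ x z = ⨅ y ∈ subdiff φ x, ((⟪y, z⟫ : ℝ) : EReal) :=
  subdiffLiminf_eq_inf_boundary_general φ hbot hlsc x z hz
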